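/- In the Weyl algebra of four oscillators, the elements N_1 + N_2 + N_3 + N_4, L_{12}², and L_{34}² all commute with both M_1 = (1/2)(N_1 + N_2 − N_3 − N_4) and M_2 = −(1/4)Σ_{1≤i<j≤4} L_{ij}²; hence δ_1 and δ_2 of the Hahn algebra are central in the algebra generated by M_1, M_2. -/

import Mathlib

/-!
Under the canonical commutation relations, `⁅L i j, ·⁆` acts on both families `a` and `a†` as
the infinitesimal rotation of the `(i, j)`-plane. Consequently the `L i j` satisfy the `so(n)`
relations and commute with the total number operator, while `L i j` commutes with `N i + N j`
and with every other `N k`. Within `so(4)`, `L₁₂` rotates the pairs `(L₂₃, L₁₃)`, `(L₂₄, L₁₄)`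
and commutes with `L₃₄`; a rotation of the `(y, z)`-plane commutes with `y² + z²`, so `L₁₂`,
and likewise `L₃₄`, commutes with the Casimir `Σ_{i<j} L_ij²`. Everything else is read off
from `δ₁`, `δ₂` being polynomials in `N₁ + N₂ + N₃ + N₄`, `L₁₂²` and `L₃₄²`.
-/

section

attribute [local instance] LieRing.ofAssociativeRing

namespace Ring

variable {R : Type*} [Ring R]

theorem lie_mul (x y z : R) : ⁅x, y * z⁆ = ⁅x, y⁆ * z + y * ⁅x, z⁆ := by
  simp only [Ring.lie_def, sub_mul, mul_sub, mul_assoc]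
  abel

theorem mul_lie (x y z : R) : ⁅x * y, z⁆ = x * ⁅y, z⁆ + ⁅x, z⁆ * y := by
  simp only [Ring.lie_def, sub_mul, mul_sub, mul_assoc]
  abel

theorem commute_add_sq_of_lie_eq {x y z : R} (hy : ⁅x, y⁆ = z) (hz : ⁅x, z⁆ = -y) :
    Commute x (y ^ 2 + z ^ 2) := by
  rw [commute_iff_lie_eq, lie_add, sq, sq, lie_mul, lie_mul, hy, hz]
  noncomm_ring

end Ring

section CanonicalCommutation

variable {ι R : Type*} [Ring R]

structure CanonicalCommutationRelations [DecidableEq ι] (a ad : ι → R) : Prop where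
  lie_a_ad (i j : ι) : ⁅a i, ad j⁆ = if i = j then 1 else 0
  commute_a (i j : ι) : Commute (a i) (a j)
  commute_ad (i j : ι) : Commute (ad i) (ad j)

def numberOp (a ad : ι → R) (k : ι) : R := ad k * a k

def angularMomentum (a ad : ι → R) (i j : ι) : R := ad i * a j - a i * ad j

namespace CanonicalCommutationRelations

variable [DecidableEq ι] {a ad : ι → R}

theorem lie_ad_a (h : CanonicalCommutationRelations a ad) (i j : ι) :
    ⁅ad i, a j⁆ = if i = j then -1 else 0 := by
  rw [← lie_skew, h.lie_a_ad]
  split_ifs <;> simp_all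

theorem lie_numberOp_a (h : CanonicalCommutationRelations a ad) (k m : ι) :
    ⁅numberOp a ad k, a m⁆ = if k = m then -a k else 0 := by
  rw [numberOp, Ring.mul_lie, (h.commute_a k m).lie_eq, h.lie_ad_a]
  split_ifs <;> simp

theorem lie_numberOp_ad (h : CanonicalCommutationRelations a ad) (k m : ι) :
    ⁅numberOp a ad k, ad m⁆ = if k = m then ad k else 0 := by
  rw [numberOp, Ring.mul_lie, (h.commute_ad k m).lie_eq, h.lie_a_ad]
  split_ifs <;> simp

theorem commute_numberOp (h : CanonicalCommutationRelations a ad) (k m : ι) :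
    Commute (numberOp a ad k) (numberOp a ad m) := by
  rw [commute_iff_lie_eq, numberOp.eq_1 a ad m, Ring.lie_mul, h.lie_numberOp_a, h.lie_numberOp_ad]
  split_ifs with hkm
  · subst hkm; simp
  · simp

theorem lie_angularMomentum_a (h : CanonicalCommutationRelations a ad) (i j k : ι) :
    ⁅angularMomentum a ad i j, a k⁆ =
      (if j = k then a i else 0) - (if i = k then a j else 0) := by
  rw [angularMomentum, sub_lie, Ring.mul_lie, Ring.mul_lie, (h.commute_a j k).lie_eq,
    (h.commute_a i k).lie_eq, h.lie_ad_a, h.lie_ad_a]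
  split_ifs <;> simp_all

theorem lie_angularMomentum_ad (h : CanonicalCommutationRelations a ad) (i j k : ι) :
    ⁅angularMomentum a ad i j, ad k⁆ =
      (if j = k then ad i else 0) - (if i = k then ad j else 0) := by
  rw [angularMomentum, sub_lie, Ring.mul_lie, Ring.mul_lie, (h.commute_ad i k).lie_eq,
    (h.commute_ad j k).lie_eq, h.lie_a_ad, h.lie_a_ad]
  split_ifs <;> simp_all

theorem lie_angularMomentum_angularMomentum (h : CanonicalCommutationRelations a ad)
    (i j k l : ι) :
    ⁅angularMomentum a ad i j, angularMomentum a ad k l⁆ =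
      (if j = k then angularMomentum a ad i l else 0)
        - (if i = k then angularMomentum a ad j l else 0)
        + (if j = l then angularMomentum a ad k i else 0)
        - (if i = l then angularMomentum a ad k j else 0) := by
  rw [angularMomentum.eq_1 a ad k l, lie_sub, Ring.lie_mul, Ring.lie_mul,
    h.lie_angularMomentum_a, h.lie_angularMomentum_a, h.lie_angularMomentum_ad,
    h.lie_angularMomentum_ad]
  simp only [angularMomentum]
  split_ifs <;> noncomm_ring

theorem lie_angularMomentum_numberOp (h : CanonicalCommutationRelations a ad) (i j k : ι) :
    ⁅angularMomentum a ad i j, numberOp a ad k⁆ =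
      (if j = k then ad i * a k + ad k * a i else 0)
        - (if i = k then ad j * a k + ad k * a j else 0) := by
  rw [numberOp, Ring.lie_mul, h.lie_angularMomentum_a, h.lie_angularMomentum_ad]
  split_ifs <;> noncomm_ring

theorem commute_angularMomentum_sum_numberOp [Fintype ι] (h : CanonicalCommutationRelations a ad)
    (i j : ι) : Commute (angularMomentum a ad i j) (∑ k, numberOp a ad k) := by
  rw [commute_iff_lie_eq, lie_sum]
  simp only [h.lie_angularMomentum_numberOp, Finset.sum_sub_distrib, Finset.sum_ite_eq,
    Finset.mem_univ, if_true]
  abel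

theorem commute_angularMomentum_numberOp_add (h : CanonicalCommutationRelations a ad) {i j : ι}
    (hij : i ≠ j) : Commute (angularMomentum a ad i j) (numberOp a ad i + numberOp a ad j) := by
  rw [commute_iff_lie_eq, lie_add, h.lie_angularMomentum_numberOp,
    h.lie_angularMomentum_numberOp, if_neg hij.symm, if_pos rfl, if_pos rfl, if_neg hij]
  abel

theorem commute_angularMomentum_numberOp_of_ne (h : CanonicalCommutationRelations a ad)
    {i j k : ι} (hik : i ≠ k) (hjk : j ≠ k) :
    Commute (angularMomentum a ad i j) (numberOp a ad k) := by
  rw [commute_iff_lie_eq, h.lie_angularMomentum_numberOp, if_neg hjk, if_neg hik, sub_zero]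

end CanonicalCommutationRelations

def casimir [Fintype ι] [LinearOrder ι] (L : ι → ι → R) : R :=
  ∑ i, ∑ j, if i < j then L i j ^ 2 else 0

theorem CanonicalCommutationRelations.commute_sum_numberOp_casimir [Fintype ι] [LinearOrder ι]
    {a ad : ι → R} (h : CanonicalCommutationRelations a ad) :
    Commute (∑ k, numberOp a ad k) (casimir (angularMomentum a ad)) := by
  refine Commute.sum_right _ _ _ fun i _ ↦ Commute.sum_right _ _ _ fun j _ ↦ ?_
  split_ifs
  · exact ((h.commute_angularMomentum_sum_numberOp i j).pow_left 2).symm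
  · exact Commute.zero_right _

theorem casimir_fin_four (L : Fin 4 → Fin 4 → R) :
    casimir L = L 0 1 ^ 2 + L 0 2 ^ 2 + L 0 3 ^ 2 + L 1 2 ^ 2 + L 1 3 ^ 2 + L 2 3 ^ 2 := by
  simp only [casimir, Fin.sum_univ_four, Fin.reduceLT, lt_self_iff_false, ↓reduceIte, add_zero,
    zero_add]
  abel

namespace CanonicalCommutationRelations

variable {a ad : Fin 4 → R}

theorem commute_angularMomentum_zero_one_casimir (h : CanonicalCommutationRelations a ad) :
    Commute (angularMomentum a ad 0 1) (casimir (angularMomentum a ad)) := by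
  set L := angularMomentum a ad
  rw [casimir_fin_four, show L 0 1 ^ 2 + L 0 2 ^ 2 + L 0 3 ^ 2 + L 1 2 ^ 2 + L 1 3 ^ 2 + L 2 3 ^ 2
    = L 0 1 ^ 2 + L 2 3 ^ 2 + (L 1 2 ^ 2 + L 0 2 ^ 2) + (L 1 3 ^ 2 + L 0 3 ^ 2) by abel]
  refine (((Commute.self_pow _ 2).add_right (Commute.pow_right ?_ 2)).add_right
    (Ring.commute_add_sq_of_lie_eq ?_ ?_)).add_right (Ring.commute_add_sq_of_lie_eq ?_ ?_)
  all_goals simp [L, commute_iff_lie_eq, h.lie_angularMomentum_angularMomentum]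

theorem commute_angularMomentum_two_three_casimir (h : CanonicalCommutationRelations a ad) :
    Commute (angularMomentum a ad 2 3) (casimir (angularMomentum a ad)) := by
  set L := angularMomentum a ad
  rw [casimir_fin_four, show L 0 1 ^ 2 + L 0 2 ^ 2 + L 0 3 ^ 2 + L 1 2 ^ 2 + L 1 3 ^ 2 + L 2 3 ^ 2
    = L 2 3 ^ 2 + L 0 1 ^ 2 + (L 0 3 ^ 2 + L 0 2 ^ 2) + (L 1 3 ^ 2 + L 1 2 ^ 2) by abel]
  refine (((Commute.self_pow _ 2).add_right (Commute.pow_right ?_ 2)).add_right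
    (Ring.commute_add_sq_of_lie_eq ?_ ?_)).add_right (Ring.commute_add_sq_of_lie_eq ?_ ?_)
  all_goals simp [L, commute_iff_lie_eq, h.lie_angularMomentum_angularMomentum]

end CanonicalCommutationRelations

end CanonicalCommutation

end

noncomputable section Hahn

variable {R : Type*} [Ring R] [Algebra ℂ R]

def hahnM₁ (N : Fin 4 → R) : R := (1 / 2 : ℂ) • (N 0 + N 1 - N 2 - N 3)

def hahnM₂ (L : Fin 4 → Fin 4 → R) : R := -((1 / 4 : ℂ) • casimir L)

def hahnδ₁ (T P Q : R) : R := -((1 / 2 : ℂ) • ((T + 2) * (P - Q)))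

def hahnδ₂ (T P Q : R) : R := (1 / 2 : ℂ) • ((T + 2) ^ 2) - (P + Q + 2)

theorem Commute.hahnδ₁ {T P Q x : R} (hT : Commute T x) (hP : Commute P x) (hQ : Commute Q x) :
    Commute (hahnδ₁ T P Q) x :=
  (((hT.add_left (Commute.ofNat_left 2 x)).mul_left (hP.sub_left hQ)).smul_left _).neg_left

theorem Commute.hahnδ₂ {T P Q x : R} (hT : Commute T x) (hP : Commute P x) (hQ : Commute Q x) :
    Commute (hahnδ₂ T P Q) x :=
  (((hT.add_left (Commute.ofNat_left 2 x)).pow_left 2).smul_left _).sub_left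
    ((hP.add_left hQ).add_left (Commute.ofNat_left 2 x))

namespace CanonicalCommutationRelations

variable {a ad : Fin 4 → R}

theorem commute_sum_numberOp_hahnM₁ (h : CanonicalCommutationRelations a ad) :
    Commute (∑ k, numberOp a ad k) (hahnM₁ (numberOp a ad)) := by
  have hN (i : Fin 4) : Commute (∑ k, numberOp a ad k) (numberOp a ad i) :=
    Commute.sum_left _ _ _ fun k _ ↦ h.commute_numberOp k i
  exact ((((hN 0).add_right (hN 1)).sub_right (hN 2)).sub_right (hN 3)).smul_right _

theorem commute_sum_numberOp_hahnM₂ (h : CanonicalCommutationRelations a ad) :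
    Commute (∑ k, numberOp a ad k) (hahnM₂ (angularMomentum a ad)) :=
  (h.commute_sum_numberOp_casimir.smul_right _).neg_right

theorem commute_angularMomentum_zero_one_hahnM₁ (h : CanonicalCommutationRelations a ad) :
    Commute (angularMomentum a ad 0 1) (hahnM₁ (numberOp a ad)) :=
  (((h.commute_angularMomentum_numberOp_add (by decide)).sub_right
    (h.commute_angularMomentum_numberOp_of_ne (by decide) (by decide))).sub_right
    (h.commute_angularMomentum_numberOp_of_ne (by decide) (by decide))).smul_right _

theorem commute_angularMomentum_two_three_hahnM₁ (h : CanonicalCommutationRelations a ad) :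
    Commute (angularMomentum a ad 2 3) (hahnM₁ (numberOp a ad)) := by
  rw [hahnM₁, sub_sub]
  exact (((h.commute_angularMomentum_numberOp_of_ne (by decide) (by decide)).add_right
    (h.commute_angularMomentum_numberOp_of_ne (by decide) (by decide))).sub_right
    (h.commute_angularMomentum_numberOp_add (by decide))).smul_right _

theorem commute_angularMomentum_zero_one_hahnM₂ (h : CanonicalCommutationRelations a ad) :
    Commute (angularMomentum a ad 0 1) (hahnM₂ (angularMomentum a ad)) :=
  (h.commute_angularMomentum_zero_one_casimir.smul_right _).neg_right

theorem commute_angularMomentum_two_three_hahnM₂ (h : CanonicalCommutationRelations a ad) :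
    Commute (angularMomentum a ad 2 3) (hahnM₂ (angularMomentum a ad)) :=
  (h.commute_angularMomentum_two_three_casimir.smul_right _).neg_right

end CanonicalCommutationRelations

end Hahn

/-- In the Weyl algebra of four oscillators, the elements
N₁+N₂+N₃+N₄, L₁₂², L₃₄² all commute with both M₁ = (1/2)(N₁+N₂−N₃−N₄) and
M₂ = −(1/4)Σ_{1≤i<j≤4} L_{ij}²; hence δ₁, δ₂ of the Hahn algebra are central
in the algebra generated by M₁, M₂. -/
theorem stmt9 (R : Type*) [Ring R] [Algebra ℂ R]
    (a ad : Fin 4 → R)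
    (hcomm : ∀ μ ν, a μ * ad ν - ad ν * a μ = if μ = ν then 1 else 0)
    (haa : ∀ μ ν, a μ * a ν = a ν * a μ)
    (hadad : ∀ μ ν, ad μ * ad ν = ad ν * ad μ)
    (N : Fin 4 → R) (hN : ∀ i, N i = ad i * a i)
    (L : Fin 4 → Fin 4 → R)
    (hL : ∀ i j, L i j = ad i * a j - a i * ad j)
    (M1 M2 d1 d2 : R)
    (hM1 : M1 = (1/2 : ℂ) • (N 0 + N 1 - N 2 - N 3))
    (hM2 : M2 = -((1/4 : ℂ) • (∑ i : Fin 4, ∑ j : Fin 4, if i < j then L i j ^ 2 else 0)))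
    (hd1 : d1 = -((1/2 : ℂ) • ((N 0 + N 1 + N 2 + N 3 + 2) * (L 0 1 ^ 2 - L 2 3 ^ 2))))
    (hd2 : d2 = (1/2 : ℂ) • ((N 0 + N 1 + N 2 + N 3 + 2) ^ 2)
                 - (L 0 1 ^ 2 + L 2 3 ^ 2 + 2)) :
    ((N 0 + N 1 + N 2 + N 3) * M1 = M1 * (N 0 + N 1 + N 2 + N 3) ∧
     (N 0 + N 1 + N 2 + N 3) * M2 = M2 * (N 0 + N 1 + N 2 + N 3) ∧
     L 0 1 ^ 2 * M1 = M1 * L 0 1 ^ 2 ∧ L 0 1 ^ 2 * M2 = M2 * L 0 1 ^ 2 ∧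
     L 2 3 ^ 2 * M1 = M1 * L 2 3 ^ 2 ∧ L 2 3 ^ 2 * M2 = M2 * L 2 3 ^ 2) ∧
    (d1 * M1 = M1 * d1 ∧ d1 * M2 = M2 * d1 ∧
     d2 * M1 = M1 * d2 ∧ d2 * M2 = M2 * d2) := by
  have h : CanonicalCommutationRelations a ad := ⟨hcomm, haa, hadad⟩
  obtain rfl : N = numberOp a ad := funext hN
  obtain rfl : L = angularMomentum a ad := funext fun i ↦ funext (hL i)
  obtain rfl : M1 = hahnM₁ (numberOp a ad) := hM1
  obtain rfl : M2 = hahnM₂ (angularMomentum a ad) := hM2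
  obtain rfl := hd1
  obtain rfl := hd2
  rw [← Fin.sum_univ_four]
  have hT₁ := h.commute_sum_numberOp_hahnM₁
  have hT₂ := h.commute_sum_numberOp_hahnM₂
  have hP₁ := h.commute_angularMomentum_zero_one_hahnM₁.pow_left 2
  have hP₂ := h.commute_angularMomentum_zero_one_hahnM₂.pow_left 2
  have hQ₁ := h.commute_angularMomentum_two_three_hahnM₁.pow_left 2
  have hQ₂ := h.commute_angularMomentum_two_three_hahnM₂.pow_left 2
  exact ⟨⟨hT₁, hT₂, hP₁, hP₂, hQ₁, hQ₂⟩, hT₁.hahnδ₁ hP₁ hQ₁, hT₂.hahnδ₁ hP₂ hQ₂,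
    hT₁.hahnδ₂ hP₁ hQ₁, hT₂.hahnδ₂ hP₂ hQ₂⟩
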